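/- arXiv:2405.11241 — 9 statements merged into one kernel-verified Lean document; each statement's English description precedes it below -/
import Mathlib

section
/- Let (U_n)_{n≥1} be i.i.d. with common distribution function F, and suppose the limit ℓ₁⁻ := lim_{t→1⁻} (F(t)−1)/(t−1) exists with 0 < ℓ₁⁻ < +∞. Then for every real x, lim_{n→∞} P(max_{1≤k≤n} U_k ≤ 1 + x/n) equals e^{ℓ₁⁻ x} if x ≤ 0 and equals 1 if x > 0; in particular the normalized maxima converge to a negative Weibull law with index α = 1. -/
open MeasureTheory Filter Set

lemma aux_pow_tendsto_exp (a : ℕ → ℝ) (c : ℝ)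
    (h : Tendsto (fun n : ℕ => (n : ℝ) * (a n - 1)) atTop (nhds c)) :
    Tendsto (fun n : ℕ => a n ^ n) atTop (nhds (Real.exp c)) := by
  have h0 : Tendsto a atTop (nhds 1) := by
    have hmul : Tendsto (fun n : ℕ => (n : ℝ) * (a n - 1) * (n : ℝ)⁻¹) atTop
        (nhds (c * 0)) := h.mul tendsto_inv_atTop_nhds_zero_nat
    rw [mul_zero] at hmul
    have h2 : Tendsto (fun n : ℕ => a n - 1) atTop (nhds 0) := by
      apply hmul.congr'
      filter_upwards [eventually_ge_atTop 1] with n hn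
      have hn' : (n : ℝ) ≠ 0 := Nat.cast_ne_zero.mpr (by omega)
      field_simp
    have := h2.add_const 1
    simpa using this
  have hpos : ∀ᶠ n in atTop, 0 < a n :=
    h0.eventually (eventually_gt_nhds (by norm_num : (0 : ℝ) < 1))
  have hlog : Tendsto (fun n : ℕ => (n : ℝ) * Real.log (a n)) atTop (nhds c) := by
    have hinv : Tendsto (fun n : ℕ => (a n)⁻¹) atTop (nhds 1) := by
      simpa using h0.inv₀ (one_ne_zero)
    have hlower : Tendsto (fun n : ℕ => (n : ℝ) * (a n - 1) * (a n)⁻¹) atTop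
        (nhds c) := by simpa using h.mul hinv
    refine tendsto_of_tendsto_of_tendsto_of_le_of_le' hlower h ?_ ?_
    · filter_upwards [hpos] with n hn
      have hle : 1 - (a n)⁻¹ ≤ Real.log (a n) := Real.one_sub_inv_le_log_of_pos hn
      have hne : a n ≠ 0 := ne_of_gt hn
      have heq : (a n - 1) * (a n)⁻¹ = 1 - (a n)⁻¹ := by field_simp
      calc (n : ℝ) * (a n - 1) * (a n)⁻¹ = (n : ℝ) * ((a n - 1) * (a n)⁻¹) := by ring
        _ = (n : ℝ) * (1 - (a n)⁻¹) := by rw [heq]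
        _ ≤ (n : ℝ) * Real.log (a n) :=
          mul_le_mul_of_nonneg_left hle (Nat.cast_nonneg n)
    · filter_upwards [hpos] with n hn
      exact mul_le_mul_of_nonneg_left (Real.log_le_sub_one_of_pos hn) (Nat.cast_nonneg n)
  have := (Real.continuous_exp.tendsto c).comp hlog
  apply this.congr'
  filter_upwards [hpos] with n hn
  show Real.exp ((n : ℝ) * Real.log (a n)) = a n ^ n
  rw [Real.exp_nat_mul, Real.exp_log hn]

/-- If `(U n)` are i.i.d. with common distribution function `F`
(with `F = 0` on `(-∞,0]` and `F = 1` on `[1,∞)`), and the limit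
`ℓ₁⁻ = lim_{t→1⁻} (F t - 1)/(t - 1)` exists with `0 < ℓ₁⁻ < ∞`, then for every real `x`,
`P(max_{1≤k≤n} U_k ≤ 1 + x/n)` converges to `exp (ℓ₁⁻ x)` if `x ≤ 0` and to `1` if `x > 0`. -/
theorem iid_max_weibull {Ω : Type*} [MeasurableSpace Ω] (P : Measure Ω)
    [IsProbabilityMeasure P] (U : ℕ → Ω → ℝ) (F : ℝ → ℝ)
    (hmeas : ∀ n, Measurable (U n))
    (hindep : ProbabilityTheory.iIndepFun U P)
    (hcdf : ∀ n t, (P {ω | U n ω ≤ t}).toReal = F t)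
    (hF0 : ∀ x : ℝ, x ≤ 0 → F x = 0) (hF1 : ∀ x : ℝ, 1 ≤ x → F x = 1)
    (l : ℝ) (hl : 0 < l)
    (hlim : Tendsto (fun t : ℝ => (F t - 1) / (t - 1)) (nhdsWithin 1 (Set.Iio 1)) (nhds l))
    (x : ℝ) :
    Tendsto (fun n : ℕ =>
        (P {ω | ∀ k ∈ Finset.Icc 1 n, U k ω ≤ 1 + x / (n : ℝ)}).toReal)
      atTop (nhds (if x ≤ 0 then Real.exp (l * x) else 1)) := by
  have key : ∀ (n : ℕ) (t : ℝ),
      (P {ω | ∀ k ∈ Finset.Icc 1 n, U k ω ≤ t}).toReal = F t ^ n := by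
    intro n t
    have hset : {ω | ∀ k ∈ Finset.Icc 1 n, U k ω ≤ t}
        = ⋂ k ∈ Finset.Icc 1 n, (U k ⁻¹' Iic t) := by
      ext ω; simp [Set.mem_iInter]
    rw [hset, hindep.meas_biInter (fun k _ => ⟨Iic t, measurableSet_Iic, rfl⟩),
      ENNReal.toReal_prod]
    have : ∀ k ∈ Finset.Icc 1 n, (P (U k ⁻¹' Iic t)).toReal = F t := by
      intro k _
      exact hcdf k t
    rw [Finset.prod_congr rfl this, Finset.prod_const, Nat.card_Icc]
    norm_num
  rcases lt_or_ge x 0 with hx | hx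
  · -- case x < 0
    rw [if_pos hx.le]
    have ht : Tendsto (fun n : ℕ => 1 + x / (n : ℝ)) atTop (nhdsWithin 1 (Iio 1)) := by
      rw [tendsto_nhdsWithin_iff]
      constructor
      · have : Tendsto (fun n : ℕ => x * (n : ℝ)⁻¹) atTop (nhds 0) := by
          simpa using tendsto_inv_atTop_nhds_zero_nat.const_mul x
        have := this.const_add 1
        simp only [add_zero] at this
        refine this.congr fun n => by rw [div_eq_mul_inv]
      · filter_upwards [eventually_ge_atTop 1] with n hn
        have hn' : (0 : ℝ) < n := by exact_mod_cast Nat.lt_of_lt_of_le Nat.zero_lt_one hn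
        have : x / (n : ℝ) < 0 := div_neg_of_neg_of_pos hx hn'
        simpa [Set.mem_Iio] using by linarith
    have h2 : Tendsto (fun n : ℕ =>
        x * ((F (1 + x / (n : ℝ)) - 1) / ((1 + x / (n : ℝ)) - 1))) atTop
        (nhds (x * l)) := (hlim.comp ht).const_mul x
    have h3 : Tendsto (fun n : ℕ => (n : ℝ) * (F (1 + x / (n : ℝ)) - 1)) atTop
        (nhds (l * x)) := by
      rw [mul_comm l x]
      apply h2.congr'
      filter_upwards [eventually_ge_atTop 1] with n hn
      have hn' : (n : ℝ) ≠ 0 := Nat.cast_ne_zero.mpr (by omega)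
      have hd : (1 + x / (n : ℝ)) - 1 = x / (n : ℝ) := by ring
      rw [hd]
      have hx0 : x ≠ 0 := ne_of_lt hx
      field_simp
    have := aux_pow_tendsto_exp (fun n => F (1 + x / (n : ℝ))) (l * x) h3
    apply this.congr fun n => (key n _).symm
  · -- case x ≥ 0 : probability is constantly 1
    have hval : ∀ n : ℕ, (P {ω | ∀ k ∈ Finset.Icc 1 n, U k ω ≤ 1 + x / (n : ℝ)}).toReal
        = 1 := by
      intro n
      have ht : (1 : ℝ) ≤ 1 + x / (n : ℝ) := by
        have : 0 ≤ x / (n : ℝ) := div_nonneg hx (Nat.cast_nonneg n)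
        linarith
      rw [key n _, hF1 _ ht, one_pow]
    have hif : (if x ≤ 0 then Real.exp (l * x) else 1) = 1 := by
      rcases eq_or_lt_of_le hx with h | h
      · simp [← h]
      · rw [if_neg (not_le.mpr h)]
    rw [hif]
    exact tendsto_const_nhds.congr fun n => (hval n).symm
end

section
/- Let (U_n)_{n≥1} be i.i.d. with common distribution function F, and suppose the limit ℓ₀⁺ := lim_{t→0⁺} F(t)/t exists with 0 < ℓ₀⁺ < +∞. Then for every real x, lim_{n→∞} P(max_{1≤k≤n} 1/U_k ≤ x·n) equals 0 if x ≤ 0 and equals e^{−ℓ₀⁺/x} if x > 0; in particular the sequence (U_n^{−1}) belongs to the maximum domain of attraction of the Fréchet distribution with index α = 1. -/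
open MeasureTheory Filter Set

lemma aux_one_sub_pow (p : ℕ → ℝ) (c : ℝ) (hc : 0 < c)
    (h : Tendsto (fun n : ℕ => (n : ℝ) * p n) atTop (nhds c)) :
    Tendsto (fun n : ℕ => (1 - p n) ^ n) atTop (nhds (Real.exp (-c))) := by
  have hp0 : Tendsto p atTop (nhds (0 : ℝ)) := by
    have h2 : Tendsto (fun n : ℕ => ((n : ℝ) * p n) * (1 / n)) atTop (nhds (c * 0)) :=
      h.mul tendsto_one_div_atTop_nhds_zero_nat
    rw [mul_zero] at h2
    refine h2.congr' ?_
    filter_upwards [eventually_ge_atTop 1] with n hn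
    have : (n : ℝ) ≠ 0 := by positivity
    field_simp
  have hppos : ∀ᶠ n in atTop, 0 < p n := by
    filter_upwards [h.eventually_const_lt (by linarith : (0:ℝ) < c),
      eventually_ge_atTop 1] with n h1 h2
    have hn : (0:ℝ) < (n : ℝ) := by exact_mod_cast h2
    rcases mul_pos_iff.mp h1 with ⟨_, hp⟩ | ⟨hn', _⟩
    · exact hp
    · linarith
  have hplt : ∀ᶠ n in atTop, p n < 1 := hp0.eventually_lt_const one_pos
  -- derivative of log (1 + y) at 0
  have hd : HasDerivAt (fun y : ℝ => Real.log (1 + y)) 1 0 := by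
    have h1 : HasDerivAt (fun y : ℝ => 1 + y) 1 0 := by
      simpa using (hasDerivAt_id (0:ℝ)).const_add 1
    have h2 : HasDerivAt Real.log 1 (1 + 0) := by
      simpa using Real.hasDerivAt_log (by norm_num : (1:ℝ) + 0 ≠ 0)
    have := h2.comp 0 h1
    rw [mul_one] at this
    exact this
  have hslope : Tendsto (fun y : ℝ => Real.log (1 + y) / y)
      (nhdsWithin 0 {(0:ℝ)}ᶜ) (nhds 1) := by
    have := hasDerivAt_iff_tendsto_slope.mp hd
    refine this.congr fun y => ?_
    simp [slope_def_field, div_eq_mul_inv]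
  have hcomp : Tendsto (fun n : ℕ => -p n) atTop (nhdsWithin 0 {(0:ℝ)}ᶜ) := by
    rw [tendsto_nhdsWithin_iff]
    constructor
    · simpa using hp0.neg
    · filter_upwards [hppos] with n hn
      simp only [mem_compl_iff, mem_singleton_iff]
      intro hcontra
      simp only [neg_eq_zero] at hcontra
      exact hn.ne' hcontra
  have hr : Tendsto (fun n : ℕ => Real.log (1 - p n) / (-p n)) atTop (nhds 1) := by
    have := hslope.comp hcomp
    refine this.congr fun n => ?_
    simp only [Function.comp]
    ring_nf
  have hnl : Tendsto (fun n : ℕ => (n : ℝ) * Real.log (1 - p n)) atTop (nhds (-c)) := by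
    have h2 : Tendsto (fun n : ℕ => (Real.log (1 - p n) / (-p n)) * (-((n:ℝ) * p n)))
        atTop (nhds (1 * (-c))) := hr.mul h.neg
    rw [one_mul] at h2
    refine h2.congr' ?_
    filter_upwards [hppos] with n hn
    have : p n ≠ 0 := hn.ne'
    field_simp
  have hexp : Tendsto (fun n : ℕ => Real.exp ((n : ℝ) * Real.log (1 - p n)))
      atTop (nhds (Real.exp (-c))) := (Real.continuous_exp.tendsto _).comp hnl
  refine hexp.congr' ?_
  filter_upwards [hplt] with n hn
  rw [Real.exp_nat_mul, Real.exp_log (by linarith)]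

/-- If `(U n)` are i.i.d. with common distribution function `F`
(with `F = 0` on `(-∞,0]` and `F = 1` on `[1,∞)`), and the limit
`ℓ₀⁺ = lim_{t→0⁺} F t / t` exists with `0 < ℓ₀⁺ < ∞`, then for every real `x`,
`P(max_{1≤k≤n} 1/U_k ≤ x n)` converges to `0` if `x ≤ 0` and to `exp (-ℓ₀⁺/x)` if `x > 0`;
i.e. `(1/U_n)` is in the MDA of the Fréchet distribution with index `α = 1`. -/
theorem iid_inv_max_frechet {Ω : Type*} [MeasurableSpace Ω] (P : Measure Ω)
    [IsProbabilityMeasure P] (U : ℕ → Ω → ℝ) (F : ℝ → ℝ)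
    (hmeas : ∀ n, Measurable (U n))
    (hindep : ProbabilityTheory.iIndepFun U P)
    (hcdf : ∀ n t, (P {ω | U n ω ≤ t}).toReal = F t)
    (hF0 : ∀ x : ℝ, x ≤ 0 → F x = 0) (hF1 : ∀ x : ℝ, 1 ≤ x → F x = 1)
    (l : ℝ) (hl : 0 < l)
    (hlim : Tendsto (fun t : ℝ => F t / t) (nhdsWithin 0 (Set.Ioi 0)) (nhds l))
    (x : ℝ) :
    Tendsto (fun n : ℕ =>
        (P {ω | ∀ k ∈ Finset.Icc 1 n, 1 / U k ω ≤ x * (n : ℝ)}).toReal)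
      atTop (nhds (if x ≤ 0 then 0 else Real.exp (-(l / x)))) := by
  have hB0 : ∀ k : ℕ, P {ω | U k ω ≤ (0:ℝ)} = 0 := by
    intro k
    have h1 := hcdf k 0
    rw [hF0 0 le_rfl] at h1
    rcases (ENNReal.toReal_eq_zero_iff _).mp h1 with h | h
    · exact h
    · exact absurd h (measure_ne_top P _)
  by_cases hx : x ≤ 0
  · simp only [if_pos hx]
    refine (tendsto_const_nhds : Tendsto (fun _ : ℕ => (0:ℝ)) atTop (nhds 0)).congr' ?_
    filter_upwards [eventually_ge_atTop 1] with n hn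
    have hsub : {ω | ∀ k ∈ Finset.Icc 1 n, 1 / U k ω ≤ x * (n:ℝ)} ⊆ {ω | U 1 ω ≤ (0:ℝ)} := by
      intro ω hω
      have h1 := hω 1 (Finset.mem_Icc.mpr ⟨le_rfl, hn⟩)
      have hxn : x * (n:ℝ) ≤ 0 := mul_nonpos_iff.mpr (Or.inr ⟨hx, n.cast_nonneg⟩)
      exact one_div_nonpos.mp (h1.trans hxn)
    rw [measure_mono_null hsub (hB0 1)]
    simp
  · push_neg at hx
    simp only [if_neg (not_le.mpr hx)]
    set μ := P.map (U 1) with hμdef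
    have hinst : ∀ k : ℕ, IsProbabilityMeasure (P.map (U k)) :=
      fun k => Measure.isProbabilityMeasure_map (hmeas k).aemeasurable
    have hIic : ∀ k : ℕ, ∀ t : ℝ, (P.map (U k)) (Iic t) = ENNReal.ofReal (F t) := by
      intro k t
      rw [Measure.map_apply (hmeas k) measurableSet_Iic]
      have h1 := hcdf k t
      have h2 : U k ⁻¹' (Iic t) = {ω | U k ω ≤ t} := rfl
      rw [h2, ← h1, ENNReal.ofReal_toReal (measure_ne_top P _)]
    have hmeq : ∀ k : ℕ, P.map (U k) = μ := by
      intro k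
      have := hinst k
      refine MeasureTheory.Measure.ext_of_Iic _ _ (fun a => ?_)
      rw [hIic k a, hIic 1 a]
    have instμ : IsProbabilityMeasure μ := hinst 1
    have hμIic : ∀ t : ℝ, (μ (Iic t)).toReal = F t := by
      intro t
      rw [hμdef, hIic 1 t]
      exact ENNReal.toReal_ofReal (by rw [← hcdf 1 t]; exact ENNReal.toReal_nonneg)
    have hμ0 : μ (Iic 0) = 0 := by
      rcases (ENNReal.toReal_eq_zero_iff _).mp (by rw [hμIic 0, hF0 0 le_rfl]) with h | h
      · exact h
      · exact absurd h (measure_ne_top μ _)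
    set G : ℝ → ℝ := fun t => (μ (Iio t)).toReal with hGdef
    have hGF : ∀ t, G t ≤ F t := by
      intro t
      rw [← hμIic t]
      exact ENNReal.toReal_mono (measure_ne_top _ _) (measure_mono Iio_subset_Iic_self)
    have hFG : ∀ t : ℝ, 0 < t → F (t - t^2) ≤ G t := by
      intro t ht
      rw [← hμIic (t - t^2)]
      refine ENNReal.toReal_mono (measure_ne_top _ _) (measure_mono ?_)
      exact Iic_subset_Iio.mpr (by nlinarith)
    -- squeeze to get G t / t → l
    have hcomp : Tendsto (fun t : ℝ => t - t^2) (nhdsWithin 0 (Ioi 0)) (nhdsWithin 0 (Ioi 0)) := by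
      rw [tendsto_nhdsWithin_iff]
      constructor
      · have : Tendsto (fun t : ℝ => t - t^2) (nhds 0) (nhds (0 - 0^2)) :=
          (continuous_id.sub (continuous_pow 2)).tendsto 0
        simpa using this.mono_left nhdsWithin_le_nhds
      · filter_upwards [Ioo_mem_nhdsGT (by norm_num : (0:ℝ) < 1)] with t ht
        have := ht.1; have := ht.2
        simp only [mem_Ioi]; nlinarith
    have hone : Tendsto (fun t : ℝ => 1 - t) (nhdsWithin 0 (Ioi 0)) (nhds 1) := by
      have : Tendsto (fun t : ℝ => 1 - t) (nhds 0) (nhds (1 - 0)) :=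
        (continuous_const.sub continuous_id).tendsto 0
      simpa using this.mono_left nhdsWithin_le_nhds
    have hlow : Tendsto (fun t : ℝ => F (t - t^2) / t) (nhdsWithin 0 (Ioi 0)) (nhds l) := by
      have h2 : Tendsto (fun t : ℝ => (F (t - t^2) / (t - t^2)) * (1 - t))
          (nhdsWithin 0 (Ioi 0)) (nhds (l * 1)) := (hlim.comp hcomp).mul hone
      rw [mul_one] at h2
      refine h2.congr' ?_
      filter_upwards [Ioo_mem_nhdsGT (by norm_num : (0:ℝ) < 1)] with t ht
      have ht0 : t ≠ 0 := ne_of_gt ht.1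
      have ht1 : t - t^2 ≠ 0 := by nlinarith [ht.1, ht.2]
      have ht2 : 1 - t ≠ 0 := by linarith [ht.2]
      field_simp
    have hGlim : Tendsto (fun t : ℝ => G t / t) (nhdsWithin 0 (Ioi 0)) (nhds l) := by
      refine tendsto_of_tendsto_of_tendsto_of_le_of_le' hlow hlim ?_ ?_
      · filter_upwards [self_mem_nhdsWithin] with t ht
        exact div_le_div_of_nonneg_right (hFG t ht) (mem_Ioi.mp ht).le
      · filter_upwards [self_mem_nhdsWithin] with t ht
        exact div_le_div_of_nonneg_right (hGF t) (mem_Ioi.mp ht).le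
    -- the sequence t_n = (x n)⁻¹
    set T : ℕ → ℝ := fun n => (x * n)⁻¹ with hTdef
    have hTlim : Tendsto T atTop (nhdsWithin 0 (Ioi 0)) := by
      rw [tendsto_nhdsWithin_iff]
      constructor
      · exact (Tendsto.const_mul_atTop hx tendsto_natCast_atTop_atTop).inv_tendsto_atTop
      · filter_upwards [eventually_ge_atTop 1] with n hn
        have hn0 : (0:ℝ) < n := by exact_mod_cast hn
        simp only [mem_Ioi, hTdef]
        positivity
    have hnG : Tendsto (fun n : ℕ => (n : ℝ) * G (T n)) atTop (nhds (l / x)) := by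
      have h2 : Tendsto (fun n : ℕ => (G (T n) / T n) * x⁻¹) atTop (nhds (l * x⁻¹)) :=
        ((hGlim.comp hTlim).mul_const x⁻¹)
      rw [← div_eq_mul_inv] at h2
      refine h2.congr' ?_
      filter_upwards [eventually_ge_atTop 1] with n hn
      have hn0 : (0:ℝ) < n := by exact_mod_cast hn
      have hxn : x * (n:ℝ) ≠ 0 := by positivity
      have hx0 : x ≠ 0 := ne_of_gt hx
      simp only [hTdef]
      field_simp
    have hmain := aux_one_sub_pow (fun n => G (T n)) (l / x) (div_pos hl hx) hnG
    refine hmain.congr' ?_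
    filter_upwards [eventually_ge_atTop 1] with n hn
    have hn0 : (0:ℝ) < n := by exact_mod_cast hn
    have hxn : 0 < x * (n:ℝ) := mul_pos hx hn0
    have htn : 0 < T n := by simp only [hTdef]; positivity
    have hBmeas : MeasurableSet (Iic (0:ℝ) ∪ Ici (T n)) :=
      measurableSet_Iic.union measurableSet_Ici
    have hset : {ω | ∀ k ∈ Finset.Icc 1 n, 1 / U k ω ≤ x * (n:ℝ)}
        = ⋂ k ∈ Finset.Icc 1 n, U k ⁻¹' (Iic 0 ∪ Ici (T n)) := by
      ext ω
      simp only [mem_setOf_eq, mem_iInter, mem_preimage, mem_union, mem_Iic, mem_Ici]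
      refine forall₂_congr fun k hk => ?_
      constructor
      · intro h
        rcases le_or_gt (U k ω) 0 with h0 | h0
        · exact Or.inl h0
        · refine Or.inr ?_
          have := (one_div_le h0 hxn).mp h
          rwa [one_div] at this
      · rintro (h0 | h0)
        · exact (one_div_nonpos.mpr h0).trans hxn.le
        · have hu : 0 < U k ω := lt_of_lt_of_le htn h0
          exact (one_div_le hu hxn).mpr (by rwa [one_div])
    rw [hset, hindep.meas_biInter
      (fun k _ => ⟨Iic 0 ∪ Ici (T n), hBmeas, rfl⟩)]
    have hfac : ∀ k : ℕ, P (U k ⁻¹' (Iic 0 ∪ Ici (T n))) = μ (Ici (T n)) := by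
      intro k
      rw [← Measure.map_apply (hmeas k) hBmeas, hmeq k]
      refine le_antisymm ((measure_union_le _ _).trans ?_) (measure_mono subset_union_right)
      rw [hμ0, zero_add]
    rw [Finset.prod_congr rfl (fun k _ => hfac k), Finset.prod_const, Nat.card_Icc]
    simp only [Nat.add_sub_cancel]
    have hIci : μ (Ici (T n)) = 1 - μ (Iio (T n)) := by
      rw [← compl_Iio, prob_compl_eq_one_sub measurableSet_Iio]
    rw [hIci, ENNReal.toReal_pow,
      ENNReal.toReal_sub_of_le prob_le_one ENNReal.one_ne_top, ENNReal.toReal_one]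
end

section
/- Let (U_n)_{n≥1} be i.i.d. with common distribution function F, and suppose lim_{t→0⁺} F(t)/t = 0 (i.e. ℓ₀⁺ = 0). Then for every real x, lim_{n→∞} P(max_{1≤k≤n} 1/U_k ≤ x·n) equals 0 if x ≤ 0 and equals 1 if x > 0. -/
open MeasureTheory Filter Set

/-- If `(U n)` are i.i.d. with common distribution function `F`
(with `F = 0` on `(-∞,0]` and `F = 1` on `[1,∞)`), and `lim_{t→0⁺} F t / t = 0`,
then for every real `x`, `P(max_{1≤k≤n} 1/U_k ≤ x n)` converges to `0` if `x ≤ 0`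
and to `1` if `x > 0`. -/
theorem iid_inv_max_ell_zero {Ω : Type*} [MeasurableSpace Ω] (P : Measure Ω)
    [IsProbabilityMeasure P] (U : ℕ → Ω → ℝ) (F : ℝ → ℝ)
    (hmeas : ∀ n, Measurable (U n))
    (hindep : ProbabilityTheory.iIndepFun U P)
    (hcdf : ∀ n t, (P {ω | U n ω ≤ t}).toReal = F t)
    (hF0 : ∀ x : ℝ, x ≤ 0 → F x = 0) (hF1 : ∀ x : ℝ, 1 ≤ x → F x = 1)
    (hlim : Tendsto (fun t : ℝ => F t / t) (nhdsWithin 0 (Set.Ioi 0)) (nhds 0))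
    (x : ℝ) :
    Tendsto (fun n : ℕ =>
        (P {ω | ∀ k ∈ Finset.Icc 1 n, 1 / U k ω ≤ x * (n : ℝ)}).toReal)
      atTop (nhds (if x ≤ 0 then 0 else 1)) := by
  -- basic facts about F
  have hFnonneg : ∀ t, 0 ≤ F t := fun t => (hcdf 0 t) ▸ ENNReal.toReal_nonneg
  have hFle1 : ∀ t, F t ≤ 1 := fun t => (hcdf 0 t) ▸ by
    have := prob_le_one (μ := P) (s := {ω | U 0 ω ≤ t})
    exact ENNReal.toReal_le_of_le_ofReal zero_le_one (by simpa using this)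
  -- P(U k ≤ 0) = 0
  have hU0 : ∀ k, P {ω | U k ω ≤ 0} = 0 := by
    intro k
    have h := hcdf k 0
    rw [hF0 0 le_rfl] at h
    exact (ENNReal.toReal_eq_zero_iff _).mp h |>.resolve_right (measure_ne_top P _)
  by_cases hx : x ≤ 0
  · simp only [if_pos hx]
    have key : ∀ n : ℕ, 1 ≤ n →
        (P {ω | ∀ k ∈ Finset.Icc 1 n, 1 / U k ω ≤ x * (n : ℝ)}).toReal = 0 := by
      intro n hn
      have hsub : {ω | ∀ k ∈ Finset.Icc 1 n, 1 / U k ω ≤ x * (n : ℝ)} ⊆ {ω | U 1 ω ≤ 0} := by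
        intro ω hω
        have h1 : 1 / U 1 ω ≤ x * n := hω 1 (Finset.mem_Icc.mpr ⟨le_rfl, hn⟩)
        have hxn : x * (n : ℝ) ≤ 0 := mul_nonpos_of_nonpos_of_nonneg hx (Nat.cast_nonneg n)
        by_contra hpos
        rw [Set.mem_setOf_eq, not_le] at hpos
        have : 0 < 1 / U 1 ω := one_div_pos.mpr hpos
        linarith
      have : P {ω | ∀ k ∈ Finset.Icc 1 n, 1 / U k ω ≤ x * (n : ℝ)} = 0 :=
        le_antisymm ((measure_mono hsub).trans (hU0 1).le) zero_le
      rw [this, ENNReal.toReal_zero]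
    have : ∀ᶠ n : ℕ in atTop,
        (P {ω | ∀ k ∈ Finset.Icc 1 n, 1 / U k ω ≤ x * (n : ℝ)}).toReal = (0 : ℝ) :=
      eventually_atTop.mpr ⟨1, key⟩
    exact Tendsto.congr' (this.mono fun n h => h.symm) tendsto_const_nhds
  · push_neg at hx
    simp only [if_neg (not_le.mpr hx)]
    -- the product formula
    set B : ℕ → Set ℝ := fun n => {u : ℝ | 1 / u ≤ x * n} with hB
    have hBmeas : ∀ n, MeasurableSet (B n) := by
      intro n
      have : B n = (fun u : ℝ => 1 / u) ⁻¹' Iic (x * n) := rfl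
      rw [this]
      exact (measurable_one.div measurable_id) measurableSet_Iic
    have hprod : ∀ n : ℕ,
        P {ω | ∀ k ∈ Finset.Icc 1 n, 1 / U k ω ≤ x * (n : ℝ)}
          = ∏ k ∈ Finset.Icc 1 n, P (U k ⁻¹' B n) := by
      intro n
      have hset : {ω | ∀ k ∈ Finset.Icc 1 n, 1 / U k ω ≤ x * (n : ℝ)}
          = ⋂ k ∈ Finset.Icc 1 n, U k ⁻¹' B n := by
        ext ω; simp [hB, Set.mem_iInter]
      rw [hset]
      exact hindep.meas_biInter fun k _ => ⟨B n, hBmeas n, rfl⟩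
    -- bounds on each factor
    have hfac_le : ∀ n k, (P (U k ⁻¹' B n)).toReal ≤ 1 := fun n k =>
      ENNReal.toReal_le_of_le_ofReal zero_le_one (by simpa using prob_le_one (μ := P))
    have hfac_ge : ∀ n : ℕ, 1 ≤ n → ∀ k, 1 - F ((x * n)⁻¹) ≤ (P (U k ⁻¹' B n)).toReal := by
      intro n hn k
      have hxn : 0 < x * (n : ℝ) := by positivity
      have hIoi : U k ⁻¹' Ioi ((x * n)⁻¹) ⊆ U k ⁻¹' B n := by
        intro ω hω
        simp only [Set.mem_preimage, Set.mem_Ioi] at hω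
        have hu : 0 < U k ω := lt_trans (by positivity) hω
        simp only [hB, Set.mem_preimage, Set.mem_setOf_eq, one_div]
        rw [inv_le_comm₀ hu hxn] at *
        exact hω.le
      have hcompl : U k ⁻¹' Ioi ((x * n)⁻¹) = (U k ⁻¹' Iic ((x * n)⁻¹))ᶜ := by
        ext ω; simp [not_le]
      have hmeasI : MeasurableSet (U k ⁻¹' Iic ((x * n)⁻¹)) := (hmeas k) measurableSet_Iic
      have h1 : P (U k ⁻¹' Ioi ((x * n)⁻¹)) = 1 - P (U k ⁻¹' Iic ((x * n)⁻¹)) := by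
        rw [hcompl, prob_compl_eq_one_sub hmeasI]
      have h2 : (P (U k ⁻¹' Ioi ((x * n)⁻¹))).toReal
          = 1 - (P (U k ⁻¹' Iic ((x * n)⁻¹))).toReal := by
        rw [h1, ENNReal.toReal_sub_of_le (prob_le_one) (by simp)]
        simp
      have h3 : (P (U k ⁻¹' Iic ((x * n)⁻¹))).toReal = F ((x * n)⁻¹) := by
        have : U k ⁻¹' Iic ((x * n)⁻¹) = {ω | U k ω ≤ (x * n)⁻¹} := rfl
        rw [this, hcdf]
      calc 1 - F ((x * n)⁻¹) = (P (U k ⁻¹' Ioi ((x * n)⁻¹))).toReal := by rw [h2, h3]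
        _ ≤ (P (U k ⁻¹' B n)).toReal :=
          ENNReal.toReal_mono (measure_ne_top P _) (measure_mono hIoi)
    -- the lower bound sequence tends to 1
    have hnF : Tendsto (fun n : ℕ => (n : ℝ) * F ((x * n)⁻¹)) atTop (nhds 0) := by
      have ht0 : Tendsto (fun n : ℕ => (x * n)⁻¹) atTop (nhdsWithin 0 (Ioi 0)) := by
        rw [tendsto_nhdsWithin_iff]
        constructor
        · exact Tendsto.inv_tendsto_atTop
            (tendsto_natCast_atTop_atTop.const_mul_atTop hx)
        · filter_upwards [eventually_ge_atTop 1] with n hn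
          have : (0:ℝ) < x * n := by positivity
          simpa using inv_pos.mpr this
      have hcomp : Tendsto (fun n : ℕ => F ((x * n)⁻¹) / (x * n)⁻¹) atTop (nhds 0) :=
        hlim.comp ht0
      have heq : ∀ᶠ n : ℕ in atTop,
          F ((x * n)⁻¹) / (x * n)⁻¹ * x⁻¹ = (n : ℝ) * F ((x * n)⁻¹) := by
        filter_upwards [eventually_ge_atTop 1] with n hn
        have hxn : (0:ℝ) < x * n := by positivity
        field_simp
      have := hcomp.mul_const x⁻¹
      rw [zero_mul] at this
      exact Tendsto.congr' heq this
    have hlower : Tendsto (fun n : ℕ => (1 - F ((x * n)⁻¹)) ^ n) atTop (nhds 1) := by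
      have h1 : Tendsto (fun n : ℕ => 1 - (n : ℝ) * F ((x * n)⁻¹)) atTop (nhds 1) := by
        have := hnF.const_sub 1
        simpa using this
      apply tendsto_of_tendsto_of_tendsto_of_le_of_le h1 tendsto_const_nhds
      · intro n
        have : (-2 : ℝ) ≤ -F ((x * n)⁻¹) := by
          have := hFle1 ((x * n)⁻¹); linarith
        have := one_add_mul_le_pow this n
        calc 1 - (n:ℝ) * F ((x * n)⁻¹) = 1 + n * (-F ((x * n)⁻¹)) := by ring
          _ ≤ (1 + -F ((x * n)⁻¹)) ^ n := this
          _ = (1 - F ((x * n)⁻¹)) ^ n := by ring_nf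
      · intro n
        apply pow_le_one₀
        · have := hFle1 ((x * n)⁻¹); linarith
        · have := hFnonneg ((x * n)⁻¹); linarith
    -- squeeze
    apply tendsto_of_tendsto_of_tendsto_of_le_of_le' hlower tendsto_const_nhds
    · filter_upwards [eventually_ge_atTop 1] with n hn
      rw [hprod n, ENNReal.toReal_prod]
      calc (1 - F ((x * n)⁻¹)) ^ n
          = ∏ _k ∈ Finset.Icc 1 n, (1 - F ((x * n)⁻¹)) := by
            rw [Finset.prod_const, Nat.card_Icc]; simp
        _ ≤ ∏ k ∈ Finset.Icc 1 n, (P (U k ⁻¹' B n)).toReal := by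
            apply Finset.prod_le_prod
            · intro k _
              have := hFle1 ((x * n)⁻¹); linarith
            · intro k _; exact hfac_ge n hn k
    · filter_upwards with n
      rw [hprod n, ENNReal.toReal_prod]
      calc ∏ k ∈ Finset.Icc 1 n, (P (U k ⁻¹' B n)).toReal
          ≤ ∏ _k ∈ Finset.Icc 1 n, (1:ℝ) := by
            apply Finset.prod_le_prod
            · intro k _; exact ENNReal.toReal_nonneg
            · intro k _; exact hfac_le n k
        _ = 1 := by simp
end

section
/- Assume (R_n, F) satisfies the Oppenheim tail inequalities. For every real a ≥ 1 and every integer n ≥ 1, |P(⋂_{k=1}^n {R_k > a}) − F(1/a)^n| ≤ S_a · n/a² · F(1/a)^{n−1}. -/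
open MeasureTheory Filter Set

/-- The ratio sequence `(R n)` of a generalized Oppenheim expansion, together with the
distribution function `F`, satisfies the *Oppenheim tail inequalities*: each `R n ≥ 1` a.s.
and for every `k ≥ 1`, every strictly increasing finite sequence of indices and all reals
`x_1, …, x_k ≥ 1`,
`∏_j F(1/(x_j+1)) ≤ P(R_{i_1} > x_1, …, R_{i_k} > x_k) ≤ ∏_j F(1/x_j)`. -/
def OppenheimTail {Ω : Type*} [MeasurableSpace Ω] (P : Measure Ω)
    (R : ℕ → Ω → ℝ) (F : ℝ → ℝ) : Prop :=
  (∀ n : ℕ, ∀ᵐ ω ∂P, 1 ≤ R n ω) ∧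
  ∀ k : ℕ, 0 < k → ∀ i : ℕ → ℕ, StrictMono i → ∀ x : ℕ → ℝ, (∀ j < k, 1 ≤ x j) →
    (∏ j ∈ Finset.range k, F (1 / (x j + 1))) ≤
        (P (⋂ j ∈ Finset.range k, {ω | x j < R (i j) ω})).toReal ∧
      (P (⋂ j ∈ Finset.range k, {ω | x j < R (i j) ω})).toReal ≤
        ∏ j ∈ Finset.range k, F (1 / x j)

/-- Condition (condF): `F x - F y ≤ β (x - y)` whenever `x ≥ y`. -/
def CondF (F : ℝ → ℝ) (β : ℝ) : Prop := ∀ x y : ℝ, y ≤ x → F x - F y ≤ β * (x - y)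

/-- The slope `S_a = (F(1/a) - F(1/(a+1))) / (1/a - 1/(a+1))`. -/
noncomputable def Sq (F : ℝ → ℝ) (a : ℝ) : ℝ :=
  (F (1 / a) - F (1 / (a + 1))) / (1 / a - 1 / (a + 1))

lemma pow_sub_pow_le_aux {p q : ℝ} (hq : 0 ≤ q) (hqp : q ≤ p) (n : ℕ) :
    p ^ n - q ^ n ≤ n * (p - q) * p ^ (n - 1) := by
  induction n with
  | zero => simp
  | succ m ih =>
    have hp : 0 ≤ p := hq.trans hqp
    rcases Nat.eq_zero_or_pos m with hm | hm
    · subst hm; simp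
    · have hpm : p ^ (m - 1) * p = p ^ m := by
        rw [← pow_succ]; congr 1; omega
      have A : p * (p ^ m - q ^ m) ≤ m * (p - q) * p ^ m := by
        calc p * (p ^ m - q ^ m) ≤ p * (m * (p - q) * p ^ (m - 1)) :=
              mul_le_mul_of_nonneg_left ih hp
          _ = m * (p - q) * (p ^ (m - 1) * p) := by ring
          _ = m * (p - q) * p ^ m := by rw [hpm]
      have B : (p - q) * q ^ m ≤ (p - q) * p ^ m :=
        mul_le_mul_of_nonneg_left (pow_le_pow_left₀ hq hqp m) (by linarith)
      have hE : p ^ (m + 1) - q ^ (m + 1) = p * (p ^ m - q ^ m) + (p - q) * q ^ m := by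
        rw [pow_succ, pow_succ]; ring
      have : (m + 1 : ℕ) - 1 = m := by omega
      rw [this, hE]
      push_cast
      linarith

/-- Theorem 3.1 (iii). -/
theorem oppenheim_min_inequality {Ω : Type*} [MeasurableSpace Ω] (P : Measure Ω)
    [IsProbabilityMeasure P] (R : ℕ → Ω → ℝ) (F : ℝ → ℝ)
    (hF : Monotone F) (hF0 : ∀ x : ℝ, x ≤ 0 → F x = 0) (hF1 : ∀ x : ℝ, 1 ≤ x → F x = 1)
    (hR : OppenheimTail P R F)
    (a : ℝ) (ha : 1 ≤ a) (n : ℕ) (hn : 1 ≤ n) :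
    |(P (⋂ k ∈ Finset.Icc 1 n, {ω | a < R k ω})).toReal - F (1 / a) ^ n| ≤
      Sq F a * n / a ^ 2 * F (1 / a) ^ (n - 1) := by
  obtain ⟨hR1, hR2⟩ := hR
  have hapos : 0 < a := lt_of_lt_of_le one_pos ha
  set p := F (1 / a) with hp
  set q := F (1 / (a + 1)) with hq
  have hq0 : 0 ≤ q := by
    have h1 : F 0 ≤ q := hF (by positivity)
    have h2 : F 0 = 0 := hF0 0 le_rfl
    linarith
  have hqp : q ≤ p := hF (by
    rw [div_le_div_iff₀ (by linarith) hapos]; nlinarith)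
  have hp0 : 0 ≤ p := hq0.trans hqp
  have hp1 : p ≤ 1 := by
    have h1 : p ≤ F 1 := hF (by rw [div_le_one hapos]; exact ha)
    rw [hF1 1 le_rfl] at h1; exact h1
  obtain ⟨hlow, hhigh⟩ := hR2 n hn (fun j => j + 1) (fun _ _ h => by simpa using h)
    (fun _ => a) (fun _ _ => ha)
  have hset : (⋂ k ∈ Finset.Icc 1 n, {ω | a < R k ω}) =
      ⋂ j ∈ Finset.range n, {ω | (fun _ : ℕ => a) j < R ((fun j => j + 1) j) ω} := by
    ext ω
    simp only [Set.mem_iInter, Finset.mem_Icc, Finset.mem_range, Set.mem_setOf_eq]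
    constructor
    · intro h j hj; exact h (j + 1) ⟨by omega, by omega⟩
    · intro h k hk
      have := h (k - 1) (by omega)
      simpa [Nat.sub_add_cancel hk.1] using this
  simp only [Finset.prod_const, Finset.card_range] at hlow hhigh
  rw [hset]
  set X := (P (⋂ j ∈ Finset.range n, {ω | (fun _ : ℕ => a) j < R ((fun j => j + 1) j) ω})).toReal
  have key : p ^ n - q ^ n ≤ n * (p - q) * p ^ (n - 1) := pow_sub_pow_le_aux hq0 hqp n
  have hd : (1 : ℝ) / a - 1 / (a + 1) = 1 / (a * (a + 1)) := by
    rw [div_sub_div _ _ (ne_of_gt hapos) (by linarith)]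
    congr 1 <;> ring
  have hSq : Sq F a = (p - q) * (a * (a + 1)) := by
    rw [Sq, hd, one_div (a * (a + 1)), division_def, inv_inv]
  have hslope : (p - q) ≤ Sq F a / a ^ 2 := by
    rw [hSq, le_div_iff₀ (by positivity)]
    nlinarith
  have hstep : (n : ℝ) * (p - q) * p ^ (n - 1) ≤ Sq F a * n / a ^ 2 * p ^ (n - 1) := by
    have h1 : (n : ℝ) * (p - q) ≤ (n : ℝ) * (Sq F a / a ^ 2) :=
      mul_le_mul_of_nonneg_left hslope (by positivity)
    have h2 : (n : ℝ) * (Sq F a / a ^ 2) = Sq F a * n / a ^ 2 := by ring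
    have := mul_le_mul_of_nonneg_right h1 (pow_nonneg hp0 (n - 1))
    rw [h2] at this
    exact this
  have hX : X - p ^ n ≤ 0 := by linarith
  rw [abs_of_nonpos hX]
  linarith
end

section
/- Assume (R_n, F) satisfies the Oppenheim tail inequalities and F satisfies condition (condF) with some constant β > 0. Let x, y be reals with 1 < x < y and F(1/x) < 1/2. Then lim_{n→∞} [P(Z_n > x, M_n ≤ y) − P(Z_n > x)·P(M_n ≤ y)] = 0. -/
open MeasureTheory Filter Set

/-- Corollary 4.5: under (condF), if `1 < x < y` and `F(1/x) < 1/2`,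
then `P(Z_n > x, M_n ≤ y) - P(Z_n > x) P(M_n ≤ y) → 0`, where `M_n = max_{1≤k≤n} R_k`
and `Z_n = min_{1≤k≤n} R_k`. -/
theorem oppenheim_asymptotic_independence {Ω : Type*} [MeasurableSpace Ω] (P : Measure Ω)
    [IsProbabilityMeasure P] (R : ℕ → Ω → ℝ) (F : ℝ → ℝ)
    (hF : Monotone F) (hF0 : ∀ x : ℝ, x ≤ 0 → F x = 0) (hF1 : ∀ x : ℝ, 1 ≤ x → F x = 1)
    (hR : OppenheimTail P R F)
    (β : ℝ) (hβ : 0 < β) (hcond : CondF F β)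
    (x y : ℝ) (hx : 1 < x) (hxy : x < y) (hFx : F (1 / x) < 1 / 2) :
    Tendsto (fun n : ℕ =>
        (P {ω | (∀ k ∈ Finset.Icc 1 n, x < R k ω) ∧ (∀ k ∈ Finset.Icc 1 n, R k ω ≤ y)}).toReal
          - (P {ω | ∀ k ∈ Finset.Icc 1 n, x < R k ω}).toReal
            * (P {ω | ∀ k ∈ Finset.Icc 1 n, R k ω ≤ y}).toReal)
      atTop (nhds 0) := by
  set q := F (1 / x) with hq
  have hq0 : 0 ≤ q := by
    rw [hq, ← hF0 0 le_rfl]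
    exact hF (by positivity)
  have hq1 : q < 1 := lt_trans hFx (by norm_num)
  -- bound on P(Z_n > x)
  have hb : ∀ n : ℕ, (P {ω | ∀ k ∈ Finset.Icc 1 n, x < R k ω}).toReal ≤ q ^ n := by
    intro n
    rcases Nat.eq_zero_or_pos n with h0 | hpos
    · subst h0
      simp only [Finset.Icc_self, pow_zero]
      have : {ω : Ω | ∀ k ∈ Finset.Icc 1 0, x < R k ω} = Set.univ := by
        ext ω; simp
      rw [this, measure_univ]; norm_num
    · have := (hR.2 n hpos (fun j => j + 1) (fun a b h => by simpa using h) (fun _ => x)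
        (fun j _ => hx.le)).2
      have hset : (⋂ j ∈ Finset.range n, {ω | x < R (j + 1) ω}) =
          {ω : Ω | ∀ k ∈ Finset.Icc 1 n, x < R k ω} := by
        ext ω
        simp only [Set.mem_iInter, Finset.mem_range, Set.mem_setOf_eq, Finset.mem_Icc]
        constructor
        · intro h k ⟨hk1, hkn⟩
          have := h (k - 1) (by omega)
          rwa [Nat.sub_add_cancel hk1] at this
        · intro h j hj
          exact h (j + 1) ⟨by omega, by omega⟩
      rw [hset, Finset.prod_const, Finset.card_range] at this
      exact this
  have hbc : ∀ n : ℕ, (P {ω | ∀ k ∈ Finset.Icc 1 n, x < R k ω}).toReal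
      * (P {ω | ∀ k ∈ Finset.Icc 1 n, R k ω ≤ y}).toReal ≤ q ^ n := by
    intro n
    calc (P {ω | ∀ k ∈ Finset.Icc 1 n, x < R k ω}).toReal
        * (P {ω | ∀ k ∈ Finset.Icc 1 n, R k ω ≤ y}).toReal
        ≤ (P {ω | ∀ k ∈ Finset.Icc 1 n, x < R k ω}).toReal * 1 := by
          apply mul_le_mul_of_nonneg_left _ ENNReal.toReal_nonneg
          calc (P {ω | ∀ k ∈ Finset.Icc 1 n, R k ω ≤ y}).toReal
              ≤ (P Set.univ).toReal := ENNReal.toReal_mono (measure_ne_top P _)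
                (measure_mono (Set.subset_univ _))
            _ = 1 := by simp
      _ = _ := mul_one _
      _ ≤ q ^ n := hb n
  have ha : ∀ n : ℕ, (P {ω | (∀ k ∈ Finset.Icc 1 n, x < R k ω)
      ∧ (∀ k ∈ Finset.Icc 1 n, R k ω ≤ y)}).toReal ≤ q ^ n := by
    intro n
    refine le_trans (ENNReal.toReal_mono (measure_ne_top P _)
      (measure_mono fun ω hω => hω.1)) (hb n)
  have hlim : Tendsto (fun n : ℕ => q ^ n) atTop (nhds 0) :=
    tendsto_pow_atTop_nhds_zero_of_lt_one hq0 hq1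
  have hlim' : Tendsto (fun n : ℕ => -(q ^ n)) atTop (nhds 0) := by
    simpa using hlim.neg
  refine tendsto_of_tendsto_of_tendsto_of_le_of_le hlim' hlim (fun n => ?_) (fun n => ?_)
  · have h1 : (0 : ℝ) ≤ (P {ω | (∀ k ∈ Finset.Icc 1 n, x < R k ω)
        ∧ (∀ k ∈ Finset.Icc 1 n, R k ω ≤ y)}).toReal := ENNReal.toReal_nonneg
    have := hbc n
    linarith
  · have h2 : (0 : ℝ) ≤ (P {ω | ∀ k ∈ Finset.Icc 1 n, x < R k ω}).toReal
        * (P {ω | ∀ k ∈ Finset.Icc 1 n, R k ω ≤ y}).toReal :=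
      mul_nonneg ENNReal.toReal_nonneg ENNReal.toReal_nonneg
    have := ha n
    linarith
end

section
/- Assume (R_n, F) satisfies the Oppenheim tail inequalities and F satisfies condition (condF) with constant β > 0. Then for every k ≥ 1, every strictly increasing finite sequence of indices i_1 < … < i_k and all reals x_1, …, x_k ≥ 1, |P(R_{i_1} > x_1, …, R_{i_k} > x_k) − P(R_{i_1} > x_1)···P(R_{i_k} > x_k)| ≤ β · ∑_{j=1}^k (1/x_j²) · ∏_{r≠j} F(1/x_r). -/
open MeasureTheory Filter Set

lemma prod_sub_prod_le (s : Finset ℕ) (f g : ℕ → ℝ)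
    (h0 : ∀ j ∈ s, 0 ≤ g j) (hfg : ∀ j ∈ s, g j ≤ f j) (h1 : ∀ j ∈ s, f j ≤ 1) :
    (∏ j ∈ s, f j) - ∏ j ∈ s, g j ≤
      ∑ j ∈ s, (f j - g j) * ∏ r ∈ s.erase j, f r := by
  induction s using Finset.induction_on with
  | empty => simp
  | @insert a s ha ih =>
    have h0' : ∀ j ∈ s, 0 ≤ g j := fun j hj => h0 j (Finset.mem_insert_of_mem hj)
    have hfg' : ∀ j ∈ s, g j ≤ f j := fun j hj => hfg j (Finset.mem_insert_of_mem hj)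
    have h1' : ∀ j ∈ s, f j ≤ 1 := fun j hj => h1 j (Finset.mem_insert_of_mem hj)
    have hf0 : ∀ j ∈ s, 0 ≤ f j := fun j hj => le_trans (h0' j hj) (hfg' j hj)
    have hfa : 0 ≤ f a := le_trans (h0 a (Finset.mem_insert_self a s))
      (hfg a (Finset.mem_insert_self a s))
    have hprodg : (∏ j ∈ s, g j) ≤ ∏ j ∈ s, f j := Finset.prod_le_prod h0' hfg'
    rw [Finset.prod_insert ha, Finset.prod_insert ha, Finset.sum_insert ha]
    have key : f a * (∏ j ∈ s, f j) - g a * (∏ j ∈ s, g j)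
        = f a * ((∏ j ∈ s, f j) - ∏ j ∈ s, g j) + (f a - g a) * ∏ j ∈ s, g j := by
      ring
    rw [key, Finset.erase_insert ha]
    have h2 : (f a - g a) * (∏ j ∈ s, g j) ≤ (f a - g a) * ∏ j ∈ s, f j := by
      apply mul_le_mul_of_nonneg_left hprodg
      linarith [hfg a (Finset.mem_insert_self a s)]
    have h3 : f a * ((∏ j ∈ s, f j) - ∏ j ∈ s, g j)
        ≤ f a * ∑ j ∈ s, (f j - g j) * ∏ r ∈ s.erase j, f r :=
      mul_le_mul_of_nonneg_left (ih h0' hfg' h1') hfa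
    have h4 : f a * ∑ j ∈ s, (f j - g j) * ∏ r ∈ s.erase j, f r
        = ∑ j ∈ s, (f j - g j) * ∏ r ∈ (insert a s).erase j, f r := by
      rw [Finset.mul_sum]
      refine Finset.sum_congr rfl fun j hj => ?_
      have hne : a ≠ j := fun h => ha (h ▸ hj)
      rw [Finset.erase_insert_of_ne hne,
        Finset.prod_insert (fun h => ha (Finset.mem_of_mem_erase h))]
      ring
    linarith

/-- Lemma 5.1: under (condF), for every `k ≥ 1`, strictly increasing
indices `i_1 < … < i_k` and reals `x_1, …, x_k ≥ 1`,
`|P(R_{i_1} > x_1, …, R_{i_k} > x_k) - ∏_j P(R_{i_j} > x_j)|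
  ≤ β ∑_j (1/x_j²) ∏_{r ≠ j} F(1/x_r)`. -/
theorem oppenheim_quasi_independence {Ω : Type*} [MeasurableSpace Ω] (P : Measure Ω)
    [IsProbabilityMeasure P] (R : ℕ → Ω → ℝ) (F : ℝ → ℝ)
    (hF : Monotone F) (hF0 : ∀ x : ℝ, x ≤ 0 → F x = 0) (hF1 : ∀ x : ℝ, 1 ≤ x → F x = 1)
    (hR : OppenheimTail P R F)
    (β : ℝ) (hβ : 0 < β) (hcond : CondF F β)
    (k : ℕ) (hk : 1 ≤ k) (i : ℕ → ℕ) (hi : StrictMono i)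
    (x : ℕ → ℝ) (hx : ∀ j < k, 1 ≤ x j) :
    |(P (⋂ j ∈ Finset.range k, {ω | x j < R (i j) ω})).toReal
        - ∏ j ∈ Finset.range k, (P {ω | x j < R (i j) ω}).toReal| ≤
      β * ∑ j ∈ Finset.range k,
        (1 / (x j) ^ 2) * ∏ r ∈ (Finset.range k).erase j, F (1 / x r) := by

  -- Basic facts about F
  have hFnonneg : ∀ t : ℝ, 0 ≤ F t := by
    intro t
    rcases le_or_gt t 0 with h | h
    · rw [hF0 t h]
    · rw [← hF0 0 le_rfl]; exact hF h.le
  have hFle1 : ∀ t : ℝ, F t ≤ 1 := by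
    intro t
    rcases le_or_gt 1 t with h | h
    · rw [hF1 t h]
    · rw [← hF1 1 le_rfl]; exact hF h.le
  set A := (P (⋂ j ∈ Finset.range k, {ω | x j < R (i j) ω})).toReal with hA
  -- Bounds on the joint probability
  obtain ⟨hAlow, hAhigh⟩ := hR.2 k hk i hi x hx
  -- Bounds on each marginal probability
  have hmarg : ∀ j ∈ Finset.range k,
      F (1 / (x j + 1)) ≤ (P {ω | x j < R (i j) ω}).toReal ∧
      (P {ω | x j < R (i j) ω}).toReal ≤ F (1 / x j) := by
    intro j hj
    rw [Finset.mem_range] at hj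
    have hi' : StrictMono (fun n => i (n + j)) :=
      hi.comp fun a b h => Nat.add_lt_add_right h j
    have := hR.2 1 one_pos (fun n => i (n + j)) hi' (fun _ => x j)
      (fun m _ => hx j hj)
    simpa using this
  have hxj : ∀ j ∈ Finset.range k, 1 ≤ x j := fun j hj => hx j (Finset.mem_range.mp hj)
  have hBlow : (∏ j ∈ Finset.range k, F (1 / (x j + 1))) ≤
      ∏ j ∈ Finset.range k, (P {ω | x j < R (i j) ω}).toReal :=
    Finset.prod_le_prod (fun j _ => hFnonneg _) (fun j hj => (hmarg j hj).1)
  have hBhigh : (∏ j ∈ Finset.range k, (P {ω | x j < R (i j) ω}).toReal) ≤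
      ∏ j ∈ Finset.range k, F (1 / x j) :=
    Finset.prod_le_prod (fun j hj => le_trans (hFnonneg _) (hmarg j hj).1)
      (fun j hj => (hmarg j hj).2)
  -- The main difference bound
  have hD : (∏ j ∈ Finset.range k, F (1 / x j)) -
      (∏ j ∈ Finset.range k, F (1 / (x j + 1))) ≤
      ∑ j ∈ Finset.range k, (F (1 / x j) - F (1 / (x j + 1))) *
        ∏ r ∈ (Finset.range k).erase j, F (1 / x r) := by
    apply prod_sub_prod_le
    · exact fun j _ => hFnonneg _
    · intro j hj
      apply hF
      have h1 : (1 : ℝ) ≤ x j := hxj j hj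
      have : (0:ℝ) < x j := lt_of_lt_of_le one_pos h1
      apply one_div_le_one_div_of_le this
      linarith
    · exact fun j _ => hFle1 _
  have hterm : ∀ j ∈ Finset.range k,
      (F (1 / x j) - F (1 / (x j + 1))) * ∏ r ∈ (Finset.range k).erase j, F (1 / x r) ≤
      β * ((1 / (x j) ^ 2) * ∏ r ∈ (Finset.range k).erase j, F (1 / x r)) := by
    intro j hj
    have h1 : (1 : ℝ) ≤ x j := hxj j hj
    have hx0 : (0:ℝ) < x j := lt_of_lt_of_le one_pos h1
    have hx1 : (0:ℝ) < x j + 1 := by linarith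
    have hle : 1 / (x j + 1) ≤ 1 / x j := by
      apply one_div_le_one_div_of_le hx0; linarith
    have hc := hcond (1 / x j) (1 / (x j + 1)) hle
    have hdiff : 1 / x j - 1 / (x j + 1) ≤ 1 / (x j) ^ 2 := by
      rw [div_sub_div _ _ (ne_of_gt hx0) (ne_of_gt hx1)]
      rw [div_le_div_iff₀ (by positivity) (by positivity)]
      ring_nf
      nlinarith
    have hprodnn : (0:ℝ) ≤ ∏ r ∈ (Finset.range k).erase j, F (1 / x r) :=
      Finset.prod_nonneg fun r _ => hFnonneg _
    calc (F (1 / x j) - F (1 / (x j + 1))) * ∏ r ∈ (Finset.range k).erase j, F (1 / x r)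
        ≤ (β * (1 / (x j) ^ 2)) * ∏ r ∈ (Finset.range k).erase j, F (1 / x r) := by
          apply mul_le_mul_of_nonneg_right _ hprodnn
          calc F (1 / x j) - F (1 / (x j + 1)) ≤ β * (1 / x j - 1 / (x j + 1)) := hc
            _ ≤ β * (1 / (x j) ^ 2) := mul_le_mul_of_nonneg_left hdiff hβ.le
      _ = β * ((1 / (x j) ^ 2) * ∏ r ∈ (Finset.range k).erase j, F (1 / x r)) := by ring
  rw [abs_le]
  constructor
  · have := Finset.sum_le_sum hterm
    rw [← Finset.mul_sum] at this
    nlinarith [hBhigh, hAlow, hD]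
  · have := Finset.sum_le_sum hterm
    rw [← Finset.mul_sum] at this
    nlinarith [hBlow, hAhigh, hD]
end

section
/- Assume (R_n, F) satisfies the Oppenheim tail inequalities and F satisfies condition (condF) with constant β > 0. Then for every k ≥ 1, every family I_1, …, I_k of pairwise disjoint intervals of positive integers, and every real x ≥ 1, |P(⋂_{i∈I_1}{R_i > x}, …, ⋂_{i∈I_k}{R_i > x}) − P(⋂_{i∈I_1}{R_i > x})···P(⋂_{i∈I_k}{R_i > x})| ≤ (β·q/x²) · F(1/x)^{q−1}, where q = ∑_{j=1}^k #I_j is the total number of indices. -/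
open MeasureTheory Filter Set

/-- Any strictly monotone function on `Fin m` extends to a strictly monotone `ℕ → ℕ`. -/
lemma extend_strictMono {m : ℕ} (hm : 0 < m) (f : Fin m → ℕ) (hf : StrictMono f) :
    ∃ g : ℕ → ℕ, StrictMono g ∧ ∀ j : Fin m, g j = f j := by
  refine ⟨fun n => if h : n < m then f ⟨n, h⟩ else f ⟨m - 1, Nat.pred_lt hm.ne'⟩ + (n + 1 - m),
    ?_, ?_⟩
  · intro a b hab
    by_cases hb : b < m
    · have ha : a < m := lt_trans hab hb
      simp only [dif_pos ha, dif_pos hb]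
      exact hf (by exact hab)
    · by_cases ha : a < m
      · simp only [dif_pos ha, dif_neg hb]
        have h1 : f ⟨a, ha⟩ ≤ f ⟨m - 1, Nat.pred_lt hm.ne'⟩ :=
          hf.monotone (by simp only [Fin.mk_le_mk]; omega)
        omega
      · simp only [dif_neg ha, dif_neg hb]
        omega
  · intro j
    simp [dif_pos j.isLt]

/-- `a^(n+1) - b^(n+1) ≤ (n+1) (a-b) a^n` for `0 ≤ b ≤ a`. -/
lemma pow_sub_pow_le' {a b : ℝ} (hb : 0 ≤ b) (hba : b ≤ a) (n : ℕ) :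
    a ^ (n + 1) - b ^ (n + 1) ≤ (n + 1) * (a - b) * a ^ n := by
  induction n with
  | zero => simp
  | succ n ih =>
    have ha : 0 ≤ a := hb.trans hba
    have hbn : b ^ (n + 1) ≤ a ^ (n + 1) := pow_le_pow_left₀ hb hba _
    have key : a * (a ^ (n + 1) - b ^ (n + 1)) ≤ a * ((↑n + 1) * (a - b) * a ^ n) :=
      mul_le_mul_of_nonneg_left ih ha
    have h1 : a ^ (n + 2) - b ^ (n + 2)
        = a * (a ^ (n + 1) - b ^ (n + 1)) + (a - b) * b ^ (n + 1) := by ring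
    have h2 : a * ((↑n + 1) * (a - b) * a ^ n) = (↑n + 1) * (a - b) * a ^ (n + 1) := by ring
    have h3 : (a - b) * b ^ (n + 1) ≤ (a - b) * a ^ (n + 1) :=
      mul_le_mul_of_nonneg_left hbn (by linarith)
    push_cast
    nlinarith

/-- Tail bound for an arbitrary finite index set. -/
lemma tail_bound {Ω : Type*} [MeasurableSpace Ω] (P : Measure Ω) [IsProbabilityMeasure P]
    (R : ℕ → Ω → ℝ) (F : ℝ → ℝ) (hR : OppenheimTail P R F)
    (x : ℝ) (hx : 1 ≤ x) (S : Finset ℕ) :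
    F (1 / (x + 1)) ^ S.card ≤ (P (⋂ i ∈ S, {ω | x < R i ω})).toReal ∧
      (P (⋂ i ∈ S, {ω | x < R i ω})).toReal ≤ F (1 / x) ^ S.card := by
  rcases S.eq_empty_or_nonempty with rfl | hS
  · simp
  · set m := S.card with hm
    have hm0 : 0 < m := Finset.card_pos.2 hS
    have hf : StrictMono (S.orderEmbOfFin hm.symm) := (S.orderEmbOfFin hm.symm).strictMono
    obtain ⟨g, hg, hgf⟩ := extend_strictMono hm0 (S.orderEmbOfFin hm.symm) hf
    have hset : (⋂ j ∈ Finset.range m, {ω | x < R (g j) ω}) = ⋂ i ∈ S, {ω | x < R i ω} := by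
      ext ω
      simp only [Set.mem_iInter, Finset.mem_range, Set.mem_setOf_eq]
      constructor
      · intro h i hi
        have hi' : i ∈ Set.range (S.orderEmbOfFin hm.symm) := by
          rw [Finset.range_orderEmbOfFin]; exact hi
        obtain ⟨j, hj⟩ := hi'
        have := hgf j
        rw [← hj, ← this]
        exact h j j.isLt
      · intro h j hj
        have := hgf ⟨j, hj⟩
        rw [show g j = g (⟨j, hj⟩ : Fin m).val from rfl, this]
        exact h _ (Finset.orderEmbOfFin_mem S hm.symm ⟨j, hj⟩)
    have := hR.2 m hm0 g hg (fun _ => x) (fun j _ => hx)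
    rw [hset] at this
    simpa using this

/-- Lemma 5.2: under (condF), for every `k ≥ 1`, every family
`I_1, …, I_k` of pairwise disjoint intervals of positive integers and every `x ≥ 1`,
`|P(⋂_{i∈I_1}{R_i > x}, …, ⋂_{i∈I_k}{R_i > x}) - ∏_j P(⋂_{i∈I_j}{R_i > x})|
  ≤ (β q / x²) F(1/x)^{q-1}` where `q = ∑_j #I_j`. -/
theorem oppenheim_quasi_independence_intervals {Ω : Type*} [MeasurableSpace Ω]
    (P : Measure Ω) [IsProbabilityMeasure P] (R : ℕ → Ω → ℝ) (F : ℝ → ℝ)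
    (hF : Monotone F) (hF0 : ∀ x : ℝ, x ≤ 0 → F x = 0) (hF1 : ∀ x : ℝ, 1 ≤ x → F x = 1)
    (hR : OppenheimTail P R F)
    (β : ℝ) (hβ : 0 < β) (hcond : CondF F β)
    (k : ℕ) (hk : 1 ≤ k) (I : ℕ → Finset ℕ)
    (hI : ∀ j < k, ∃ c d : ℕ, 1 ≤ c ∧ I j = Finset.Icc c d)
    (hdisj : ∀ j₁ < k, ∀ j₂ < k, j₁ ≠ j₂ → Disjoint (I j₁) (I j₂))
    (x : ℝ) (hx : 1 ≤ x) :
    |(P (⋂ j ∈ Finset.range k, ⋂ i ∈ I j, {ω | x < R i ω})).toReal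
        - ∏ j ∈ Finset.range k, (P (⋂ i ∈ I j, {ω | x < R i ω})).toReal| ≤
      β * (∑ j ∈ Finset.range k, (I j).card) / x ^ 2
        * F (1 / x) ^ ((∑ j ∈ Finset.range k, (I j).card) - 1) := by
  have hx0 : (0:ℝ) < x := lt_of_lt_of_le one_pos hx
  set a := F (1 / x) with ha_def
  set b := F (1 / (x + 1)) with hb_def
  have hb0 : 0 ≤ b := by
    have : F 0 ≤ b := hF (by positivity)
    rwa [hF0 0 le_rfl] at this
  have hba : b ≤ a := hF (by
    apply one_div_le_one_div_of_le hx0; linarith)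
  have ha0 : 0 ≤ a := hb0.trans hba
  set q := ∑ j ∈ Finset.range k, (I j).card with hq_def
  -- the union of the intervals
  set U := (Finset.range k).biUnion I with hU_def
  have hUcard : U.card = q := Finset.card_biUnion (by
    intro j₁ h₁ j₂ h₂ hne
    exact hdisj j₁ (Finset.mem_range.mp h₁) j₂ (Finset.mem_range.mp h₂) hne)
  have hset : (⋂ j ∈ Finset.range k, ⋂ i ∈ I j, {ω | x < R i ω})
      = ⋂ i ∈ U, {ω | x < R i ω} := (Finset.set_biInter_biUnion _ _ _).symm
  have hA := tail_bound P R F hR x hx U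
  rw [hUcard] at hA
  -- bounds for the product
  have hP := fun j => tail_bound P R F hR x hx (I j)
  have hprod_le : (∏ j ∈ Finset.range k, (P (⋂ i ∈ I j, {ω | x < R i ω})).toReal)
      ≤ a ^ q := by
    rw [hq_def, ← Finset.prod_pow_eq_pow_sum]
    exact Finset.prod_le_prod (fun j _ => ENNReal.toReal_nonneg) (fun j _ => (hP j).2)
  have hprod_ge : b ^ q ≤ ∏ j ∈ Finset.range k, (P (⋂ i ∈ I j, {ω | x < R i ω})).toReal := by
    rw [hq_def, ← Finset.prod_pow_eq_pow_sum]
    exact Finset.prod_le_prod (fun j _ => pow_nonneg hb0 _) (fun j _ => (hP j).1)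
  have habs : |(P (⋂ j ∈ Finset.range k, ⋂ i ∈ I j, {ω | x < R i ω})).toReal
      - ∏ j ∈ Finset.range k, (P (⋂ i ∈ I j, {ω | x < R i ω})).toReal| ≤ a ^ q - b ^ q := by
    rw [hset, abs_sub_le_iff]
    constructor <;> linarith [hA.1, hA.2]
  refine habs.trans ?_
  -- now the analytic estimate
  have hslope : a - b ≤ β / x ^ 2 := by
    have h1 : a - b ≤ β * (1 / x - 1 / (x + 1)) :=
      hcond _ _ (by apply one_div_le_one_div_of_le hx0; linarith)
    have h2 : 1 / x - 1 / (x + 1) = 1 / (x * (x + 1)) := by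
      field_simp
      ring
    have h3 : 1 / (x * (x + 1)) ≤ 1 / x ^ 2 := by
      apply one_div_le_one_div_of_le (by positivity)
      nlinarith
    calc a - b ≤ β * (1 / (x * (x + 1))) := by rw [← h2]; exact h1
      _ ≤ β * (1 / x ^ 2) := by
          exact mul_le_mul_of_nonneg_left h3 hβ.le
      _ = β / x ^ 2 := by ring
  rcases Nat.eq_zero_or_pos q with hq0 | hqpos
  · rw [hq0]
    simp
  · obtain ⟨n, hn⟩ : ∃ n, q = n + 1 := ⟨q - 1, (Nat.succ_pred_eq_of_pos hqpos).symm⟩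
    rw [hn]
    have hkey := pow_sub_pow_le' hb0 hba n
    have hpow : (0:ℝ) ≤ a ^ n := pow_nonneg ha0 n
    have : ((n:ℝ) + 1) * (a - b) * a ^ n ≤ ((n:ℝ) + 1) * (β / x ^ 2) * a ^ n := by
      have := mul_le_mul_of_nonneg_left hslope (by positivity : (0:ℝ) ≤ (n:ℝ) + 1)
      exact mul_le_mul_of_nonneg_right this hpow
    have hfinal : a ^ (n + 1) - b ^ (n + 1) ≤ ((n:ℝ) + 1) * (β / x ^ 2) * a ^ n :=
      hkey.trans this
    have hcast : β * ((n + 1 : ℕ) : ℝ) / x ^ 2 * a ^ ((n + 1) - 1)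
        = ((n:ℝ) + 1) * (β / x ^ 2) * a ^ n := by
      push_cast
      ring_nf
    rw [hcast]
    exact hfinal
end

section
/- Assume (R_n, F) satisfies the Oppenheim tail inequalities, F satisfies condition (condF) with some constant β > 0, and (u_n)_{n≥1} is a sequence of real numbers with u_n → 0 as n → ∞. Then for every fixed integer k ≥ 1, writing n' = ⌊n/k⌋, one has lim_{n→∞} [P(max_{1≤j≤n} 1/R_j < u_n) − (P(max_{1≤j≤n'} 1/R_j < u_n))^k] = 0. -/
open MeasureTheory Filter Set

lemma oppenheim_aux {Ω : Type*} [MeasurableSpace Ω] (P : Measure Ω) [IsProbabilityMeasure P]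
    (R : ℕ → Ω → ℝ) (F : ℝ → ℝ) (hF : Monotone F) (hF0 : ∀ x : ℝ, x ≤ 0 → F x = 0)
    (hR : OppenheimTail P R F) (β : ℝ) (hβ : 0 < β) (hcond : CondF F β)
    (u : ℝ) (hu1 : u ≤ 1) (hu2 : u ≤ 1 / (2 * β)) (m : ℕ) (hm : 1 ≤ m) :
    (P {ω | ∀ j ∈ Finset.Icc 1 m, 1 / R j ω < u}).toReal ≤ (1 / 2 : ℝ) ^ m := by
  have hae : ∀ᵐ ω ∂P, ∀ j, 1 ≤ R j ω := ae_all_iff.mpr hR.1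
  rcases le_or_gt u 0 with h0 | h0
  · have hzero : P {ω | ∀ j ∈ Finset.Icc 1 m, 1 / R j ω < u} = 0 := by
      apply measure_eq_zero_iff_ae_notMem.mpr
      filter_upwards [hR.1 1] with ω hω hmem
      have h1 := hmem 1 (Finset.mem_Icc.mpr ⟨le_refl 1, hm⟩)
      have hpos : (0 : ℝ) < 1 / R 1 ω := by
        apply one_div_pos.mpr; linarith
      linarith
    rw [hzero]
    simp only [ENNReal.toReal_zero]
    positivity
  · set B := ⋂ j ∈ Finset.range m, {ω | (1 : ℝ) / u < R (j + 1) ω} with hB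
    have hmono : P {ω | ∀ j ∈ Finset.Icc 1 m, 1 / R j ω < u} ≤ P B := by
      apply measure_mono_ae
      filter_upwards [hae] with ω hω
      simp only [le_Prop_eq]
      intro hA
      rw [hB]
      refine Set.mem_iInter₂.mpr fun j hj => ?_
      simp only [Set.mem_setOf_eq]
      have hjm : j < m := Finset.mem_range.mp hj
      have h2 := hA (j + 1) (Finset.mem_Icc.mpr ⟨by omega, by omega⟩)
      have hRpos : (0 : ℝ) < R (j + 1) ω := lt_of_lt_of_le one_pos (hω (j + 1))
      rw [div_lt_iff₀ h0]
      have h3 : (1 : ℝ) < u * R (j + 1) ω := (div_lt_iff₀ hRpos).mp h2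
      nlinarith
    have hone : (1 : ℝ) ≤ 1 / u := by
      rw [le_div_iff₀ h0]; linarith
    have htail := (hR.2 m hm (fun j => j + 1) (fun a b hab => by simpa using hab)
      (fun _ => 1 / u) (fun j _ => hone)).2
    simp only [one_div_one_div, Finset.prod_const, Finset.card_range] at htail
    have hchain : (P {ω | ∀ j ∈ Finset.Icc 1 m, 1 / R j ω < u}).toReal ≤ F u ^ m := by
      refine le_trans (ENNReal.toReal_mono (measure_ne_top P _) hmono) ?_
      exact htail
    refine le_trans hchain ?_
    have hF0' : F 0 = 0 := hF0 0 le_rfl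
    have hFnonneg : 0 ≤ F u := by
      have := hF h0.le
      linarith [hF0'.symm ▸ this]
    have hFhalf : F u ≤ 1 / 2 := by
      have h := hcond u 0 h0.le
      rw [hF0'] at h
      have h1 : β * u ≤ β * (1 / (2 * β)) :=
        mul_le_mul_of_nonneg_left hu2 hβ.le
      have h2 : β * (1 / (2 * β)) = 1 / 2 := by
        field_simp
      linarith
    exact pow_le_pow_left₀ hFnonneg hFhalf m

/-- Proposition 5.5: under (condF), if `u_n → 0`, then for every fixed
`k ≥ 1`, writing `n' = ⌊n/k⌋`,
`P(max_{1≤j≤n} 1/R_j < u_n) - P(max_{1≤j≤n'} 1/R_j < u_n)^k → 0`. -/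
theorem oppenheim_leadbetter_power_limit {Ω : Type*} [MeasurableSpace Ω]
    (P : Measure Ω) [IsProbabilityMeasure P] (R : ℕ → Ω → ℝ) (F : ℝ → ℝ)
    (hF : Monotone F) (hF0 : ∀ x : ℝ, x ≤ 0 → F x = 0) (hF1 : ∀ x : ℝ, 1 ≤ x → F x = 1)
    (hR : OppenheimTail P R F)
    (β : ℝ) (hβ : 0 < β) (hcond : CondF F β)
    (u : ℕ → ℝ) (hu : Tendsto u atTop (nhds 0))
    (k : ℕ) (hk : 1 ≤ k) :
    Tendsto (fun n : ℕ =>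
        (P {ω | ∀ j ∈ Finset.Icc 1 n, 1 / R j ω < u n}).toReal
          - (P {ω | ∀ j ∈ Finset.Icc 1 (n / k), 1 / R j ω < u n}).toReal ^ k)
      atTop (nhds 0) := by
  set ε := min 1 (1 / (2 * β)) with hε'
  have hε : 0 < ε := lt_min one_pos (by positivity)
  have hevu : ∀ᶠ n in atTop, |u n| < ε := by
    obtain ⟨N, hN⟩ := Metric.tendsto_atTop.mp hu ε hε
    exact eventually_atTop.mpr ⟨N, fun n hn => by simpa [Real.dist_eq] using hN n hn⟩
  have hhalf : Tendsto (fun m : ℕ => (1 / 2 : ℝ) ^ m) atTop (nhds 0) :=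
    tendsto_pow_atTop_nhds_zero_of_lt_one (by norm_num) (by norm_num)
  have hp : Tendsto (fun n => (P {ω | ∀ j ∈ Finset.Icc 1 n, 1 / R j ω < u n}).toReal)
      atTop (nhds 0) := by
    apply squeeze_zero' (Eventually.of_forall fun n => ENNReal.toReal_nonneg) ?_ hhalf
    filter_upwards [hevu, eventually_ge_atTop 1] with n hn hn1
    have h1 : u n ≤ 1 := le_trans (le_abs_self _) (le_trans hn.le (min_le_left _ _))
    have h2 : u n ≤ 1 / (2 * β) :=
      le_trans (le_abs_self _) (le_trans hn.le (min_le_right _ _))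
    exact oppenheim_aux P R F hF hF0 hR β hβ hcond (u n) h1 h2 n hn1
  have hdiv : Tendsto (fun n : ℕ => n / k) atTop atTop :=
    tendsto_atTop_atTop.mpr fun b =>
      ⟨b * k, fun n hn => (Nat.le_div_iff_mul_le (by omega)).mpr hn⟩
  have hq : Tendsto (fun n => (P {ω | ∀ j ∈ Finset.Icc 1 (n / k), 1 / R j ω < u n}).toReal)
      atTop (nhds 0) := by
    apply squeeze_zero' (Eventually.of_forall fun n => ENNReal.toReal_nonneg) ?_
      (hhalf.comp hdiv)
    filter_upwards [hevu, hdiv.eventually_ge_atTop 1] with n hn hn1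
    have h1 : u n ≤ 1 := le_trans (le_abs_self _) (le_trans hn.le (min_le_left _ _))
    have h2 : u n ≤ 1 / (2 * β) :=
      le_trans (le_abs_self _) (le_trans hn.le (min_le_right _ _))
    exact oppenheim_aux P R F hF hF0 hR β hβ hcond (u n) h1 h2 (n / k) hn1
  have := hp.sub (hq.pow k)
  simpa [zero_pow (by omega : k ≠ 0)] using this
end

section
/- Assume (R_n, F) satisfies the Oppenheim tail inequalities and F satisfies condition (condF) with constant β > 0. Then for every real u ≥ 1, all integers p, q ≥ 1 and all indices 1 ≤ i_1 < i_2 < … < i_p < j_1 < … < j_q, one has |P(R_{i_1} > u, …, R_{i_p} > u, R_{j_1} > u, …, R_{j_q} > u) − P(R_{i_1} > u, …, R_{i_p} > u)·P(R_{j_1} > u, …, R_{j_q} > u)| ≤ 2β(p+q)/u² + β²pq/u⁴. In particular, if (u_n)_{n≥1} is any sequence with u_n → ∞, the left-hand side evaluated at u = u_n tends to 0 as n → ∞, so the sequence (R_n) satisfies Leadbetter's distributional mixing condition Δ(u_n). -/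
open MeasureTheory Filter Set

lemma finExtend {p : ℕ} (hp : 0 < p) (f : Fin p → ℕ) (hf : StrictMono f) :
    ∃ e : ℕ → ℕ, StrictMono e ∧ ∀ n (h : n < p), e n = f ⟨n, h⟩ := by
  refine ⟨fun n => f ⟨min n (p-1), by omega⟩ + (n - (p-1)), ?_, ?_⟩
  · apply strictMono_nat_of_lt_succ
    intro n
    rcases lt_or_ge (n+1) p with h | h
    · have h1 : min n (p-1) = n := by omega
      have h2 : min (n+1) (p-1) = n+1 := by omega
      have h3 : n - (p-1) = 0 := by omega
      have h4 : (n+1) - (p-1) = 0 := by omega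
      simp only [h1, h2, h3, h4]
      have := hf (show (⟨n, by omega⟩ : Fin p) < ⟨n+1, by omega⟩ by simp [Fin.mk_lt_mk])
      omega
    · have h1 : min n (p-1) = p-1 := by omega
      have h2 : min (n+1) (p-1) = p-1 := by omega
      simp only [h1, h2]; omega
  · intro n h
    have h1 : min n (p-1) = n := by omega
    have h3 : n - (p-1) = 0 := by omega
    simp only [h1, h3, add_zero]

lemma pow_sub_pow_le_mul' {f g : ℝ} (hf : 0 ≤ f) (hfg : f ≤ g) (hg : g ≤ 1) (n : ℕ) :
    g^n - f^n ≤ n * (g - f) := by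
  induction n with
  | zero => simp
  | succ n ih =>
    have hgn : g^n ≤ 1 := pow_le_one₀ (hf.trans hfg) hg
    have hfn : f^n ≤ g^n := pow_le_pow_left₀ hf hfg n
    have hfn0 : 0 ≤ f^n := pow_nonneg hf n
    have : g^(n+1) - f^(n+1) = g*(g^n - f^n) + (g - f)*f^n := by ring
    push_cast; nlinarith

lemma setEqFin {Ω : Type*} {p : ℕ} (R : ℕ → Ω → ℝ) (u : ℝ)
    (e : ℕ → ℕ) (f : Fin p → ℕ) (he : ∀ n (h : n < p), e n = f ⟨n, h⟩) :
    (⋂ n ∈ Finset.range p, {ω | u < R (e n) ω}) = ⋂ a : Fin p, {ω | u < R (f a) ω} := by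
  ext ω
  simp only [Set.mem_iInter, Finset.mem_range, Set.mem_setOf_eq]
  constructor
  · intro h a
    have := h a a.isLt
    rwa [he a a.isLt, Fin.eta] at this
  · intro h n hn
    rw [he n hn]; exact h ⟨n, hn⟩

/-- Theorem 6.1: under (condF), for every `u ≥ 1`, `p, q ≥ 1` and
indices `1 ≤ i_1 < … < i_p < j_1 < … < j_q`,
`|P(R_{i_1} > u, …, R_{i_p} > u, R_{j_1} > u, …, R_{j_q} > u)
   - P(R_{i_1} > u, …, R_{i_p} > u) P(R_{j_1} > u, …, R_{j_q} > u)|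
 ≤ 2β(p+q)/u² + β²pq/u⁴`; in particular, for any `u_n → ∞` this quantity (at `u = u_n`)
tends to `0`, i.e. `(R_n)` satisfies Leadbetter's condition `Δ(u_n)`. -/
theorem oppenheim_leadbetter_mixing {Ω : Type*} [MeasurableSpace Ω]
    (P : Measure Ω) [IsProbabilityMeasure P] (R : ℕ → Ω → ℝ) (F : ℝ → ℝ)
    (hF : Monotone F) (hF0 : ∀ x : ℝ, x ≤ 0 → F x = 0) (hF1 : ∀ x : ℝ, 1 ≤ x → F x = 1)
    (hR : OppenheimTail P R F)
    (β : ℝ) (hβ : 0 < β) (hcond : CondF F β)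
    (p q : ℕ) (hp : 1 ≤ p) (hq : 1 ≤ q)
    (i : Fin p → ℕ) (j : Fin q → ℕ)
    (hi : StrictMono i) (hj : StrictMono j)
    (hi1 : ∀ a : Fin p, 1 ≤ i a) (hij : ∀ (a : Fin p) (b : Fin q), i a < j b) :
    (∀ u : ℝ, 1 ≤ u →
      |(P ((⋂ a : Fin p, {ω | u < R (i a) ω}) ∩ ⋂ b : Fin q, {ω | u < R (j b) ω})).toReal
          - (P (⋂ a : Fin p, {ω | u < R (i a) ω})).toReal
            * (P (⋂ b : Fin q, {ω | u < R (j b) ω})).toReal| ≤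
        2 * β * (p + q) / u ^ 2 + β ^ 2 * (p * q) / u ^ 4) ∧
    ∀ u : ℕ → ℝ, Tendsto u atTop atTop →
      Tendsto (fun n : ℕ =>
          |(P ((⋂ a : Fin p, {ω | u n < R (i a) ω}) ∩
              ⋂ b : Fin q, {ω | u n < R (j b) ω})).toReal
            - (P (⋂ a : Fin p, {ω | u n < R (i a) ω})).toReal
              * (P (⋂ b : Fin q, {ω | u n < R (j b) ω})).toReal|)
        atTop (nhds 0) := by
  -- combined index function
  set m : Fin (p+q) → ℕ := fun k =>
    if h : (k : ℕ) < p then i ⟨k, h⟩ else j ⟨(k : ℕ) - p, by omega⟩ with hm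
  have hmmono : StrictMono m := by
    intro a b hab
    have hab' : (a : ℕ) < (b : ℕ) := hab
    simp only [hm]
    rcases lt_or_ge (b : ℕ) p with hb | hb
    · rw [dif_pos (lt_trans hab' hb), dif_pos hb]
      exact hi (by simpa [Fin.mk_lt_mk] using hab')
    · rcases lt_or_ge (a : ℕ) p with ha | ha
      · rw [dif_pos ha, dif_neg (by omega)]
        exact hij _ _
      · rw [dif_neg (by omega), dif_neg (by omega)]
        exact hj (by simp [Fin.mk_lt_mk]; omega)
  obtain ⟨e1, he1, he1eq⟩ := finExtend (by omega) i hi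
  obtain ⟨e2, he2, he2eq⟩ := finExtend (by omega) j hj
  obtain ⟨e3, he3, he3eq⟩ := finExtend (p := p + q) (by omega) m hmmono
  -- key single-u bound
  have key : ∀ u : ℝ, 1 ≤ u →
      |(P ((⋂ a : Fin p, {ω | u < R (i a) ω}) ∩ ⋂ b : Fin q, {ω | u < R (j b) ω})).toReal
          - (P (⋂ a : Fin p, {ω | u < R (i a) ω})).toReal
            * (P (⋂ b : Fin q, {ω | u < R (j b) ω})).toReal| ≤
        2 * β * (p + q) / u ^ 2 + β ^ 2 * (p * q) / u ^ 4 := by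
    intro u hu
    have hu0 : (0 : ℝ) < u := by linarith
    set f := F (1 / (u + 1)) with hfdef
    set g := F (1 / u) with hgdef
    have hf0 : 0 ≤ f := by
      have := hF0 0 le_rfl
      have h := hF (show (0:ℝ) ≤ 1/(u+1) by positivity)
      linarith [h]
    have hfg : f ≤ g := hF (by
      rw [div_le_div_iff₀ (by linarith) hu0]; linarith)
    have hg1 : g ≤ 1 := by
      have := hF1 1 le_rfl
      have h := hF (show (1:ℝ)/u ≤ 1 by rw [div_le_one hu0]; exact hu)
      linarith
    have hgf : g - f ≤ β / u ^ 2 := by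
      have h1 : F (1/u) - F (1/(u+1)) ≤ β * (1/u - 1/(u+1)) :=
        hcond _ _ (by rw [div_le_div_iff₀ (by linarith) hu0]; linarith)
      have h2 : (1:ℝ)/u - 1/(u+1) = 1/(u*(u+1)) := by
        field_simp
        ring
      have h3 : (1:ℝ)/(u*(u+1)) ≤ 1/u^2 := by
        apply one_div_le_one_div_of_le (by positivity)
        nlinarith
      have : β * (1/u - 1/(u+1)) ≤ β * (1/u^2) := by
        rw [h2]; exact mul_le_mul_of_nonneg_left h3 hβ.le
      calc g - f ≤ β * (1/u - 1/(u+1)) := h1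
        _ ≤ β * (1/u^2) := this
        _ = β / u^2 := by ring
    set A := (P ((⋂ a : Fin p, {ω | u < R (i a) ω}) ∩
        ⋂ b : Fin q, {ω | u < R (j b) ω})).toReal with hA
    set B := (P (⋂ a : Fin p, {ω | u < R (i a) ω})).toReal with hB
    set C := (P (⋂ b : Fin q, {ω | u < R (j b) ω})).toReal with hC
    have hxu : ∀ k, ∀ n < k, 1 ≤ (fun _ : ℕ => u) n := fun _ _ _ => hu
    -- bounds on B
    have hBbound := hR.2 p (by omega) e1 he1 (fun _ => u) (hxu p)
    rw [setEqFin R u e1 i he1eq] at hBbound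
    simp only [Finset.prod_const, Finset.card_range] at hBbound
    -- bounds on C
    have hCbound := hR.2 q (by omega) e2 he2 (fun _ => u) (hxu q)
    rw [setEqFin R u e2 j he2eq] at hCbound
    simp only [Finset.prod_const, Finset.card_range] at hCbound
    -- bounds on A
    have hAbound := hR.2 (p+q) (by omega) e3 he3 (fun _ => u) (hxu (p+q))
    rw [setEqFin R u e3 m he3eq] at hAbound
    simp only [Finset.prod_const, Finset.card_range] at hAbound
    have hsetA : (⋂ a : Fin (p+q), {ω | u < R (m a) ω}) =
        (⋂ a : Fin p, {ω | u < R (i a) ω}) ∩ ⋂ b : Fin q, {ω | u < R (j b) ω} := by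
      ext ω
      simp only [Set.mem_iInter, Set.mem_inter_iff, Set.mem_setOf_eq, hm]
      constructor
      · intro h
        constructor
        · intro a
          have := h ⟨a, by omega⟩
          rwa [dif_pos a.isLt, Fin.eta] at this
        · intro b
          have hb := h ⟨p + (b : ℕ), by omega⟩
          rw [dif_neg (by simp only [Fin.val_mk]; omega)] at hb
          simp only [Fin.val_mk, Nat.add_sub_cancel_left, Fin.eta] at hb
          exact hb
      · rintro ⟨h1, h2⟩ k
        rcases lt_or_ge (k : ℕ) p with hk | hk
        · rw [dif_pos hk]; exact h1 _
        · rw [dif_neg (by omega)]; exact h2 _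
    rw [hsetA] at hAbound
    -- now arithmetic
    have hB0 : 0 ≤ B := ENNReal.toReal_nonneg
    have hC0 : 0 ≤ C := ENNReal.toReal_nonneg
    have hfp : f ^ (p+q) = f ^ p * f ^ q := pow_add f p q
    have hgp : g ^ (p+q) = g ^ p * g ^ q := pow_add g p q
    have hg0 : 0 ≤ g := hf0.trans hfg
    have hBC1 : B * C ≤ g ^ p * g ^ q :=
      mul_le_mul hBbound.2 hCbound.2 hC0 (pow_nonneg hg0 p)
    have hBC2 : f ^ p * f ^ q ≤ B * C :=
      mul_le_mul hBbound.1 hCbound.1 (pow_nonneg hf0 q) hB0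
    have hdiff : g ^ (p+q) - f ^ (p+q) ≤ (p+q) * (g - f) := by
      have := pow_sub_pow_le_mul' hf0 hfg hg1 (p+q)
      push_cast at this ⊢; linarith
    have habs : |A - B * C| ≤ g ^ (p+q) - f ^ (p+q) := by
      rw [abs_le]
      constructor
      · rw [hgp, hfp]; nlinarith [hAbound.1, hBC1]
      · rw [hgp, hfp]; nlinarith [hAbound.2, hBC2]
    have hstep : ((p:ℝ)+q) * (g - f) ≤ 2 * β * (p + q) / u ^ 2 := by
      have hpq : (0:ℝ) ≤ (p:ℝ) + q := by positivity
      have h1 : ((p:ℝ)+q) * (g - f) ≤ ((p:ℝ)+q) * (β / u^2) :=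
        mul_le_mul_of_nonneg_left hgf hpq
      have h0' : (0:ℝ) ≤ ((p:ℝ)+q) * (β / u^2) := by positivity
      have heq : 2 * β * ((p:ℝ) + q) / u ^ 2
          = ((p:ℝ)+q) * (β/u^2) + ((p:ℝ)+q) * (β/u^2) := by ring
      linarith
    have hlast : (0:ℝ) ≤ β ^ 2 * (p * q) / u ^ 4 := by positivity
    calc |A - B * C| ≤ g ^ (p+q) - f ^ (p+q) := habs
      _ ≤ ((p:ℝ)+q) * (g - f) := hdiff
      _ ≤ 2 * β * (p + q) / u ^ 2 := hstep
      _ ≤ 2 * β * (p + q) / u ^ 2 + β ^ 2 * (p * q) / u ^ 4 := by linarith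
  refine ⟨key, ?_⟩
  intro u hu
  have hbound : Tendsto (fun n => 2 * β * ((p:ℝ) + q) / u n ^ 2
      + β ^ 2 * ((p:ℝ) * q) / u n ^ 4) atTop (nhds 0) := by
    have h2 : Tendsto (fun n => u n ^ 2) atTop atTop :=
      (tendsto_pow_atTop (two_ne_zero)).comp hu
    have h4 : Tendsto (fun n => u n ^ 4) atTop atTop :=
      (tendsto_pow_atTop (by norm_num)).comp hu
    have t1 : Tendsto (fun n => 2 * β * ((p:ℝ) + q) / u n ^ 2) atTop (nhds 0) :=
      Tendsto.div_atTop tendsto_const_nhds h2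
    have t2 : Tendsto (fun n => β ^ 2 * ((p:ℝ) * q) / u n ^ 4) atTop (nhds 0) :=
      Tendsto.div_atTop tendsto_const_nhds h4
    simpa using t1.add t2
  apply squeeze_zero' (Eventually.of_forall fun n => abs_nonneg _)
  · filter_upwards [hu.eventually_ge_atTop 1] with n hn
    exact key (u n) hn
  · exact hbound
end
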